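/- Let N ≥ 1, c ≠ 0, c₀, C ∈ ℝ, ω ≠ 0, and let m, n be positive integers with k = m/n. Let L be a smooth function on the extended phase space ℝ^{2N+2} depending on (q,p) only with 2(cL + c₀) > 0 everywhere, set M = k·√(2(cL + c₀)), and let γ be a smooth nonvanishing solution of γ' + cγ² + C = 0 on an open interval I. Suppose G^+ and G^− are smooth complex-valued functions depending on (q,p) only with X_L G^± = ±(i/k)·M·G^±. Define H = (1/2)p_u² + (1/2)(γ² + C/c)·M² + ω²/(2γ²) − (C/c)·k²c₀, A^± = ∓(i/√2)·p_u + ω/(√2·γ) − (M/√2)·γ, and D^± = ∓(i/γ)·p_u + ω/γ² − H/ω − (C/(cω))·(c₀k² − M²/2). Then at every point with u ∈ I: {H, (G^±)^{2n}} = ∓2im·γ'·M·(G^±)^{2n}, {H, A^±} = ∓i·γ'·(M + ω/γ²)·A^±, and {H, D^±} = ∓2i·γ'·(ω/γ²)·D^±. -/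

import Mathlib

/-!
Extended phase space ℝ^{2N+2} with coordinates (u, q, p_u, p); the canonical
Poisson bracket (sign convention {q^i, p_i} = -1) is extended ℂ-bilinearly to
smooth complex-valued functions, and X_L F = {L, F}.
-/

noncomputable section

/-- The extended phase space: a point is `(u, q, p_u, p)`. -/
abbrev PS (N : ℕ) : Type := ℝ × (Fin N → ℝ) × ℝ × (Fin N → ℝ)

/-- Partial derivative with respect to `u` (complex-valued functions). -/
def pdu {N : ℕ} (F : PS N → ℂ) (x : PS N) : ℂ :=
  deriv (fun t => F (t, x.2.1, x.2.2.1, x.2.2.2)) x.1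

/-- Partial derivative with respect to `p_u`. -/
def pdpu {N : ℕ} (F : PS N → ℂ) (x : PS N) : ℂ :=
  deriv (fun t => F (x.1, x.2.1, t, x.2.2.2)) x.2.2.1

/-- Partial derivative with respect to `q^i`. -/
def pdq {N : ℕ} (i : Fin N) (F : PS N → ℂ) (x : PS N) : ℂ :=
  deriv (fun t => F (x.1, Function.update x.2.1 i t, x.2.2.1, x.2.2.2)) (x.2.1 i)

/-- Partial derivative with respect to `p_i`. -/
def pdp {N : ℕ} (i : Fin N) (F : PS N → ℂ) (x : PS N) : ℂ :=
  deriv (fun t => F (x.1, x.2.1, x.2.2.1, Function.update x.2.2.2 i t)) (x.2.2.2 i)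

/-- The canonical Poisson bracket (sign convention `{q^i, p_i} = -1`), extended
ℂ-bilinearly to complex-valued functions. -/
def pbracket {N : ℕ} (F H : PS N → ℂ) (x : PS N) : ℂ :=
  (pdpu F x * pdu H x - pdu F x * pdpu H x)
    + ∑ i : Fin N, (pdp i F x * pdq i H x - pdq i F x * pdp i H x)

/-- The Hamiltonian vector field of `L` applied to `F`: `X_L F = {L, F}`. -/
def XL {N : ℕ} (L : PS N → ℂ) (F : PS N → ℂ) : PS N → ℂ :=
  fun x => pbracket L F x


lemma hasDerivAt_pow_succ {f : ℝ → ℂ} {f' : ℂ} {x : ℝ} (h : HasDerivAt f f' x) :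
    ∀ n : ℕ, HasDerivAt (fun t => f t ^ (n + 1)) (((n : ℂ) + 1) * f x ^ n * f') x := by
  intro n
  induction n with
  | zero => simpa using h
  | succ n ih =>
      have h2 : HasDerivAt (fun t => f t ^ (n + 1) * f t)
          ((((n : ℂ) + 1) * f x ^ n * f') * f x + f x ^ (n + 1) * f') x := ih.mul h
      have : (fun t => f t ^ (n + 1) * f t) = fun t => f t ^ (n + 1 + 1) := by
        funext t; ring
      rw [this] at h2
      convert h2 using 1
      push_cast
      ring

lemma diffAt_upd {N : ℕ} (q : Fin N → ℝ) (i : Fin N) (t0 : ℝ) :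
    DifferentiableAt ℝ (fun t : ℝ => Function.update q i t) t0 := by
  apply differentiableAt_pi.mpr
  intro j
  by_cases h : j = i
  · subst h; simp only [Function.update_self]; exact differentiableAt_id
  · simp only [Function.update_apply, if_neg h]; exact differentiableAt_const _

lemma diffAt_coord_q {N : ℕ} {E : Type*} [NormedAddCommGroup E] [NormedSpace ℝ E]
    {F : PS N → E} (hF : ContDiff ℝ (⊤ : ℕ∞) F) (u pu : ℝ) (q p : Fin N → ℝ) (i : Fin N) (t0 : ℝ) :
    DifferentiableAt ℝ (fun t => F (u, Function.update q i t, pu, p)) t0 := by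
  exact ((hF.differentiable (by simp)).differentiableAt).comp t0
    ((differentiableAt_const u).prodMk ((diffAt_upd q i t0).prodMk
      ((differentiableAt_const pu).prodMk (differentiableAt_const p))))

lemma diffAt_coord_p {N : ℕ} {E : Type*} [NormedAddCommGroup E] [NormedSpace ℝ E]
    {F : PS N → E} (hF : ContDiff ℝ (⊤ : ℕ∞) F) (u pu : ℝ) (q p : Fin N → ℝ) (i : Fin N) (t0 : ℝ) :
    DifferentiableAt ℝ (fun t => F (u, q, pu, Function.update p i t)) t0 := by
  exact ((hF.differentiable (by simp)).differentiableAt).comp t0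
    ((differentiableAt_const u).prodMk ((differentiableAt_const q).prodMk
      ((differentiableAt_const pu).prodMk (diffAt_upd p i t0))))

set_option maxHeartbeats 1000000 in
/-- The shift/ladder Poisson bracket relations
`{H,(G^±)^{2n}} = ∓2imγ'M(G^±)^{2n}`, `{H,A^±} = ∓iγ'(M + ω/γ²)A^±`,
`{H,D^±} = ∓2iγ'(ω/γ²)D^±` for the extension `H`. -/
theorem kuru_negro_bracket_relations
    (N : ℕ) (hN : 1 ≤ N) (c c₀ C ω : ℝ) (hc : c ≠ 0) (hω : ω ≠ 0)
    (m n : ℕ) (hm : 0 < m) (hn : 0 < n) (k : ℝ) (hk : k = (m : ℝ) / (n : ℝ))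
    (L : PS N → ℝ) (hLsmooth : ContDiff ℝ (⊤ : ℕ∞) L)
    (hLqp : ∀ (u u' pu pu' : ℝ) (q p : Fin N → ℝ),
      L (u, q, pu, p) = L (u', q, pu', p))
    (hLpos : ∀ x : PS N, 0 < 2 * (c * L x + c₀))
    (M : PS N → ℝ) (hM : ∀ x : PS N, M x = k * Real.sqrt (2 * (c * L x + c₀)))
    (I : Set ℝ) (hIopen : IsOpen I) (hIconn : I.OrdConnected) (hInonempty : I.Nonempty)
    (γ : ℝ → ℝ) (hγ : ContDiff ℝ (⊤ : ℕ∞) γ) (hγne : ∀ u ∈ I, γ u ≠ 0)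
    (hode : ∀ u ∈ I, deriv γ u + c * γ u ^ 2 + C = 0)
    (Gp Gm : PS N → ℂ) (hGpsmooth : ContDiff ℝ (⊤ : ℕ∞) Gp) (hGmsmooth : ContDiff ℝ (⊤ : ℕ∞) Gm)
    (hGpqp : ∀ (u u' pu pu' : ℝ) (q p : Fin N → ℝ),
      Gp (u, q, pu, p) = Gp (u', q, pu', p))
    (hGmqp : ∀ (u u' pu pu' : ℝ) (q p : Fin N → ℝ),
      Gm (u, q, pu, p) = Gm (u', q, pu', p))
    (hGpladder : ∀ x : PS N,
      XL (fun y => (L y : ℂ)) Gp x = (Complex.I / (k : ℂ)) * (M x : ℂ) * Gp x)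
    (hGmladder : ∀ x : PS N,
      XL (fun y => (L y : ℂ)) Gm x = -((Complex.I / (k : ℂ)) * (M x : ℂ)) * Gm x)
    (H : PS N → ℂ)
    (hH : ∀ x : PS N, H x =
      (((1 / 2) * x.2.2.1 ^ 2 + (1 / 2) * (γ x.1 ^ 2 + C / c) * M x ^ 2
        + ω ^ 2 / (2 * γ x.1 ^ 2) - (C / c) * k ^ 2 * c₀ : ℝ) : ℂ))
    (Ap Am : PS N → ℂ)
    (hAp : ∀ x : PS N, Ap x = -(Complex.I / (Real.sqrt 2 : ℂ)) * (x.2.2.1 : ℂ)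
      + (ω : ℂ) / ((Real.sqrt 2 : ℂ) * (γ x.1 : ℂ)) - ((M x : ℂ) / (Real.sqrt 2 : ℂ)) * (γ x.1 : ℂ))
    (hAm : ∀ x : PS N, Am x = (Complex.I / (Real.sqrt 2 : ℂ)) * (x.2.2.1 : ℂ)
      + (ω : ℂ) / ((Real.sqrt 2 : ℂ) * (γ x.1 : ℂ)) - ((M x : ℂ) / (Real.sqrt 2 : ℂ)) * (γ x.1 : ℂ))
    (Dp Dm : PS N → ℂ)
    (hDp : ∀ x : PS N, Dp x = -(Complex.I / (γ x.1 : ℂ)) * (x.2.2.1 : ℂ)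
      + (ω : ℂ) / (γ x.1 : ℂ) ^ 2 - H x / (ω : ℂ)
      - ((C : ℂ) / ((c : ℂ) * (ω : ℂ))) * ((c₀ : ℂ) * (k : ℂ) ^ 2 - (M x : ℂ) ^ 2 / 2))
    (hDm : ∀ x : PS N, Dm x = (Complex.I / (γ x.1 : ℂ)) * (x.2.2.1 : ℂ)
      + (ω : ℂ) / (γ x.1 : ℂ) ^ 2 - H x / (ω : ℂ)
      - ((C : ℂ) / ((c : ℂ) * (ω : ℂ))) * ((c₀ : ℂ) * (k : ℂ) ^ 2 - (M x : ℂ) ^ 2 / 2)):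
    ∀ x : PS N, x.1 ∈ I →
      (pbracket H (fun y => Gp y ^ (2 * n)) x
          = -(2 * (m : ℂ) * Complex.I * ((deriv γ x.1 : ℝ) : ℂ) * (M x : ℂ))
              * Gp x ^ (2 * n)) ∧
      (pbracket H (fun y => Gm y ^ (2 * n)) x
          = (2 * (m : ℂ) * Complex.I * ((deriv γ x.1 : ℝ) : ℂ) * (M x : ℂ))
              * Gm x ^ (2 * n)) ∧
      (pbracket H Ap x
          = -(Complex.I * ((deriv γ x.1 : ℝ) : ℂ)
              * ((M x : ℂ) + (ω : ℂ) / (γ x.1 : ℂ) ^ 2)) * Ap x) ∧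
      (pbracket H Am x
          = (Complex.I * ((deriv γ x.1 : ℝ) : ℂ)
              * ((M x : ℂ) + (ω : ℂ) / (γ x.1 : ℂ) ^ 2)) * Am x) ∧
      (pbracket H Dp x
          = -(2 * Complex.I * ((deriv γ x.1 : ℝ) : ℂ) * ((ω : ℂ) / (γ x.1 : ℂ) ^ 2)) * Dp x) ∧
      (pbracket H Dm x
          = (2 * Complex.I * ((deriv γ x.1 : ℝ) : ℂ) * ((ω : ℂ) / (γ x.1 : ℂ) ^ 2)) * Dm x) := by
  intro x hx
  obtain ⟨u, q, pu, p⟩ := x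
  have hg : γ u ≠ 0 := hγne u hx
  have hγd : HasDerivAt γ (deriv γ u) u := ((hγ.differentiable (by simp)).differentiableAt).hasDerivAt
  have hMc : ∀ t b : ℝ, M (t, q, b, p) = M (u, q, pu, p) := by
    intro t b; rw [hM, hM, hLqp t u b pu q p]
  have hMx2 : ∀ y : PS N, M y ^ 2 = k ^ 2 * (2 * (c * L y + c₀)) := by
    intro y; rw [hM, mul_pow, Real.sq_sqrt (le_of_lt (hLpos y))]
  -- coordinate derivatives of L
  obtain ⟨dLq, hLqd⟩ : ∃ d : Fin N → ℝ, ∀ i, HasDerivAt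
      (fun t => L (u, Function.update q i t, pu, p)) (d i) (q i) :=
    ⟨_, fun i => (diffAt_coord_q hLsmooth u pu q p i (q i)).hasDerivAt⟩
  obtain ⟨dLp, hLpd⟩ : ∃ d : Fin N → ℝ, ∀ i, HasDerivAt
      (fun t => L (u, q, pu, Function.update p i t)) (d i) (p i) :=
    ⟨_, fun i => (diffAt_coord_p hLsmooth u pu q p i (p i)).hasDerivAt⟩
  -- pdu H
  have hγsq : HasDerivAt (fun t => γ t ^ 2) (2 * γ u * deriv γ u) u := by
    simpa using hγd.fun_pow 2
  have hHufun : (fun t => H (t, q, pu, p)) = fun t =>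
      (((1 / 2) * pu ^ 2 + (1 / 2) * (γ t ^ 2 + C / c) * M (u, q, pu, p) ^ 2
        + ω ^ 2 / (2 * γ t ^ 2) - (C / c) * k ^ 2 * c₀ : ℝ) : ℂ) := by
    funext t; rw [hH (t, q, pu, p), hMc t pu]
  have hHuderiv : HasDerivAt (fun t => (1 / 2) * pu ^ 2 + (1 / 2) * (γ t ^ 2 + C / c) * M (u, q, pu, p) ^ 2
        + ω ^ 2 / (2 * γ t ^ 2) - (C / c) * k ^ 2 * c₀)
      (γ u * deriv γ u * M (u, q, pu, p) ^ 2 - ω ^ 2 * deriv γ u / γ u ^ 3) u := by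
    have hA : HasDerivAt (fun t => (1 / 2) * (γ t ^ 2 + C / c) * M (u, q, pu, p) ^ 2)
        ((1 / 2) * (2 * γ u * deriv γ u) * M (u, q, pu, p) ^ 2) u :=
      ((hγsq.add_const (C / c)).const_mul (1 / 2)).mul_const _
    have hB : HasDerivAt (fun t => ω ^ 2 / (2 * γ t ^ 2))
        ((0 * (2 * γ u ^ 2) - ω ^ 2 * (2 * (2 * γ u * deriv γ u))) / (2 * γ u ^ 2) ^ 2) u :=
      (hasDerivAt_const u (ω ^ 2)).div (hγsq.const_mul 2)
        (mul_ne_zero two_ne_zero (pow_ne_zero 2 hg))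
    have hall := (((hasDerivAt_const u ((1 / 2) * pu ^ 2)).fun_add hA).fun_add hB).sub_const
      ((C / c) * k ^ 2 * c₀)
    refine hall.congr_deriv ?_
    field_simp
    ring
  have hpduH : pdu H (u, q, pu, p)
      = ((γ u * deriv γ u * M (u, q, pu, p) ^ 2 - ω ^ 2 * deriv γ u / γ u ^ 3 : ℝ) : ℂ) := by
    show deriv (fun t => H (t, q, pu, p)) u = _
    rw [hHufun]
    exact (hHuderiv.ofReal_comp).deriv
  -- pdpu H
  have hHpufun : (fun t => H (u, q, t, p)) = fun t =>
      (((1 / 2) * t ^ 2 + (1 / 2) * (γ u ^ 2 + C / c) * M (u, q, pu, p) ^ 2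
        + ω ^ 2 / (2 * γ u ^ 2) - (C / c) * k ^ 2 * c₀ : ℝ) : ℂ) := by
    funext t; rw [hH (u, q, t, p), hMc u t]
  have hpdpuH : pdpu H (u, q, pu, p) = (pu : ℂ) := by
    show deriv (fun t => H (u, q, t, p)) pu = _
    rw [hHpufun]
    have hd : HasDerivAt (fun t : ℝ => (1 / 2) * t ^ 2 + (1 / 2) * (γ u ^ 2 + C / c) * M (u, q, pu, p) ^ 2
        + ω ^ 2 / (2 * γ u ^ 2) - (C / c) * k ^ 2 * c₀) pu pu := by
      have := ((((hasDerivAt_pow 2 pu).const_mul (1 / 2)).add_const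
        ((1 / 2) * (γ u ^ 2 + C / c) * M (u, q, pu, p) ^ 2)).add_const
        (ω ^ 2 / (2 * γ u ^ 2))).sub_const ((C / c) * k ^ 2 * c₀)
      refine this.congr_deriv ?_
      push_cast
      ring
    rw [(hd.ofReal_comp).deriv]
  -- pdq / pdp of H
  have hHqfun : ∀ i, (fun t => H (u, Function.update q i t, pu, p)) = fun t =>
      (((1 / 2) * pu ^ 2 + (1 / 2) * (γ u ^ 2 + C / c)
          * (k ^ 2 * (2 * (c * L (u, Function.update q i t, pu, p) + c₀)))
        + ω ^ 2 / (2 * γ u ^ 2) - (C / c) * k ^ 2 * c₀ : ℝ) : ℂ) := by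
    intro i; funext t; rw [hH, hMx2]
  have hHpfun : ∀ i, (fun t => H (u, q, pu, Function.update p i t)) = fun t =>
      (((1 / 2) * pu ^ 2 + (1 / 2) * (γ u ^ 2 + C / c)
          * (k ^ 2 * (2 * (c * L (u, q, pu, Function.update p i t) + c₀)))
        + ω ^ 2 / (2 * γ u ^ 2) - (C / c) * k ^ 2 * c₀ : ℝ) : ℂ) := by
    intro i; funext t; rw [hH, hMx2]
  have hpdqH : ∀ i, pdq i H (u, q, pu, p)
      = (((γ u ^ 2 + C / c) * k ^ 2 * c * dLq i : ℝ) : ℂ) := by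
    intro i
    show deriv (fun t => H (u, Function.update q i t, pu, p)) (q i) = _
    rw [hHqfun i]
    have hd : HasDerivAt (fun t => (1 / 2) * pu ^ 2 + (1 / 2) * (γ u ^ 2 + C / c)
          * (k ^ 2 * (2 * (c * L (u, Function.update q i t, pu, p) + c₀)))
        + ω ^ 2 / (2 * γ u ^ 2) - (C / c) * k ^ 2 * c₀)
        ((γ u ^ 2 + C / c) * k ^ 2 * c * dLq i) (q i) := by
      have := (((hasDerivAt_const (q i) ((1 / 2) * pu ^ 2)).fun_add
        ((((((hLqd i).const_mul c).add_const c₀).const_mul 2).const_mul (k ^ 2)).const_mul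
          ((1 / 2) * (γ u ^ 2 + C / c)))).add_const (ω ^ 2 / (2 * γ u ^ 2))).sub_const
        ((C / c) * k ^ 2 * c₀)
      refine this.congr_deriv ?_
      ring
    rw [(hd.ofReal_comp).deriv]
  have hpdpH : ∀ i, pdp i H (u, q, pu, p)
      = (((γ u ^ 2 + C / c) * k ^ 2 * c * dLp i : ℝ) : ℂ) := by
    intro i
    show deriv (fun t => H (u, q, pu, Function.update p i t)) (p i) = _
    rw [hHpfun i]
    have hd : HasDerivAt (fun t => (1 / 2) * pu ^ 2 + (1 / 2) * (γ u ^ 2 + C / c)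
          * (k ^ 2 * (2 * (c * L (u, q, pu, Function.update p i t) + c₀)))
        + ω ^ 2 / (2 * γ u ^ 2) - (C / c) * k ^ 2 * c₀)
        ((γ u ^ 2 + C / c) * k ^ 2 * c * dLp i) (p i) := by
      have := (((hasDerivAt_const (p i) ((1 / 2) * pu ^ 2)).fun_add
        ((((((hLpd i).const_mul c).add_const c₀).const_mul 2).const_mul (k ^ 2)).const_mul
          ((1 / 2) * (γ u ^ 2 + C / c)))).add_const (ω ^ 2 / (2 * γ u ^ 2))).sub_const
        ((C / c) * k ^ 2 * c₀)
      refine this.congr_deriv ?_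
      ring
    rw [(hd.ofReal_comp).deriv]
  -- partials of the complexified L
  have hpduL : pdu (fun y => ((L y : ℝ) : ℂ)) (u, q, pu, p) = 0 := by
    show deriv (fun t => ((L (t, q, pu, p) : ℝ) : ℂ)) u = 0
    rw [show (fun t => ((L (t, q, pu, p) : ℝ) : ℂ)) = fun _ => ((L (u, q, pu, p) : ℝ) : ℂ) from
      funext fun t => by rw [hLqp t u pu pu q p]]
    exact deriv_const _ _
  have hpdpuL : pdpu (fun y => ((L y : ℝ) : ℂ)) (u, q, pu, p) = 0 := by
    show deriv (fun t => ((L (u, q, t, p) : ℝ) : ℂ)) pu = 0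
    rw [show (fun t => ((L (u, q, t, p) : ℝ) : ℂ)) = fun _ => ((L (u, q, pu, p) : ℝ) : ℂ) from
      funext fun t => by rw [hLqp u u t pu q p]]
    exact deriv_const _ _
  have hpdqL : ∀ i, pdq i (fun y => ((L y : ℝ) : ℂ)) (u, q, pu, p) = ((dLq i : ℝ) : ℂ) := by
    intro i
    show deriv (fun t => ((L (u, Function.update q i t, pu, p) : ℝ) : ℂ)) (q i) = _
    exact ((hLqd i).ofReal_comp).deriv
  have hpdpL : ∀ i, pdp i (fun y => ((L y : ℝ) : ℂ)) (u, q, pu, p) = ((dLp i : ℝ) : ℂ) := by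
    intro i
    show deriv (fun t => ((L (u, q, pu, Function.update p i t) : ℝ) : ℂ)) (p i) = _
    exact ((hLpd i).ofReal_comp).deriv
  have hXLsum : ∀ F : PS N → ℂ, XL (fun y => ((L y : ℝ) : ℂ)) F (u, q, pu, p)
      = ∑ i, (((dLp i : ℝ) : ℂ) * pdq i F (u, q, pu, p)
          - ((dLq i : ℝ) : ℂ) * pdp i F (u, q, pu, p)) := by
    intro F
    show (pdpu (fun y => ((L y : ℝ) : ℂ)) (u, q, pu, p) * pdu F (u, q, pu, p)
        - pdu (fun y => ((L y : ℝ) : ℂ)) (u, q, pu, p) * pdpu F (u, q, pu, p))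
      + ∑ i, (pdp i (fun y => ((L y : ℝ) : ℂ)) (u, q, pu, p) * pdq i F (u, q, pu, p)
          - pdq i (fun y => ((L y : ℝ) : ℂ)) (u, q, pu, p) * pdp i F (u, q, pu, p)) = _
    rw [hpduL, hpdpuL]
    simp only [hpdqL, hpdpL]
    ring
  have hkne : k ≠ 0 := by
    rw [hk]
    positivity
  have hode' : deriv γ u = -(c * γ u ^ 2 + C) := by
    have := hode u hx; linarith
  have hnk : (n : ℝ) * k = (m : ℝ) := by
    rw [hk]
    field_simp
  -- the ladder-function computation
  have keyG : ∀ (G : PS N → ℂ) (ε : ℂ), ContDiff ℝ (⊤ : ℕ∞) G →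
      (∀ (a a' b b' : ℝ) (q' p' : Fin N → ℝ), G (a, q', b, p') = G (a', q', b', p')) →
      (∀ y : PS N, XL (fun y => ((L y : ℝ) : ℂ)) G y = ε / (k : ℂ) * ((M y : ℝ) : ℂ) * G y) →
      pbracket H (fun y => G y ^ (2 * n)) (u, q, pu, p)
        = -(2 * (m : ℂ) * ε * ((deriv γ u : ℝ) : ℂ) * ((M (u, q, pu, p) : ℝ) : ℂ))
            * G (u, q, pu, p) ^ (2 * n) := by
    intro G ε hGs hGqp hGl
    have hFu : pdu (fun y => G y ^ (2 * n)) (u, q, pu, p) = 0 := by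
      show deriv (fun t => G (t, q, pu, p) ^ (2 * n)) u = 0
      rw [show (fun t => G (t, q, pu, p) ^ (2 * n)) = fun _ => G (u, q, pu, p) ^ (2 * n) from
        funext fun t => by rw [hGqp t u pu pu q p]]
      exact deriv_const _ _
    have hFpu : pdpu (fun y => G y ^ (2 * n)) (u, q, pu, p) = 0 := by
      show deriv (fun t => G (u, q, t, p) ^ (2 * n)) pu = 0
      rw [show (fun t => G (u, q, t, p) ^ (2 * n)) = fun _ => G (u, q, pu, p) ^ (2 * n) from
        funext fun t => by rw [hGqp u u t pu q p]]
      exact deriv_const _ _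
    have hGdq : ∀ i, HasDerivAt (fun t => G (u, Function.update q i t, pu, p))
        (pdq i G (u, q, pu, p)) (q i) :=
      fun i => (diffAt_coord_q hGs u pu q p i (q i)).hasDerivAt
    have hGdp : ∀ i, HasDerivAt (fun t => G (u, q, pu, Function.update p i t))
        (pdp i G (u, q, pu, p)) (p i) :=
      fun i => (diffAt_coord_p hGs u pu q p i (p i)).hasDerivAt
    have hcast : (((2 * n - 1 : ℕ) : ℂ) + 1) = ((2 * n : ℕ) : ℂ) := by
      have : (2 * n - 1) + 1 = 2 * n := by omega
      rw [← this]
      push_cast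
      ring
    have hpdqF : ∀ i, pdq i (fun y => G y ^ (2 * n)) (u, q, pu, p)
        = ((2 * n : ℕ) : ℂ) * G (u, q, pu, p) ^ (2 * n - 1) * pdq i G (u, q, pu, p) := by
      intro i
      have h := hasDerivAt_pow_succ (hGdq i) (2 * n - 1)
      rw [show (2 * n - 1) + 1 = 2 * n from by omega] at h
      simp only [Function.update_eq_self] at h
      show deriv (fun t => G (u, Function.update q i t, pu, p) ^ (2 * n)) (q i) = _
      rw [h.deriv, hcast]
    have hpdpF : ∀ i, pdp i (fun y => G y ^ (2 * n)) (u, q, pu, p)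
        = ((2 * n : ℕ) : ℂ) * G (u, q, pu, p) ^ (2 * n - 1) * pdp i G (u, q, pu, p) := by
      intro i
      have h := hasDerivAt_pow_succ (hGdp i) (2 * n - 1)
      rw [show (2 * n - 1) + 1 = 2 * n from by omega] at h
      simp only [Function.update_eq_self] at h
      show deriv (fun t => G (u, q, pu, Function.update p i t) ^ (2 * n)) (p i) = _
      rw [h.deriv, hcast]
    have hsum : ∑ i, (pdp i H (u, q, pu, p) * pdq i (fun y => G y ^ (2 * n)) (u, q, pu, p)
          - pdq i H (u, q, pu, p) * pdp i (fun y => G y ^ (2 * n)) (u, q, pu, p))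
        = (((γ u ^ 2 + C / c) * k ^ 2 * c : ℝ) : ℂ) * ((2 * n : ℕ) : ℂ)
            * G (u, q, pu, p) ^ (2 * n - 1)
            * ∑ i, (((dLp i : ℝ) : ℂ) * pdq i G (u, q, pu, p)
              - ((dLq i : ℝ) : ℂ) * pdp i G (u, q, pu, p)) := by
      rw [Finset.mul_sum]
      apply Finset.sum_congr rfl
      intro i _
      rw [hpdqH i, hpdpH i, hpdqF i, hpdpF i]
      push_cast
      ring
    have hXG := hXLsum G
    rw [hGl (u, q, pu, p)] at hXG
    show (pdpu H (u, q, pu, p) * pdu (fun y => G y ^ (2 * n)) (u, q, pu, p)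
        - pdu H (u, q, pu, p) * pdpu (fun y => G y ^ (2 * n)) (u, q, pu, p))
      + ∑ i, (pdp i H (u, q, pu, p) * pdq i (fun y => G y ^ (2 * n)) (u, q, pu, p)
          - pdq i H (u, q, pu, p) * pdp i (fun y => G y ^ (2 * n)) (u, q, pu, p)) = _
    rw [hFu, hFpu, hsum, ← hXG]
    have hpow : G (u, q, pu, p) ^ (2 * n - 1) * G (u, q, pu, p) = G (u, q, pu, p) ^ (2 * n) := by
      rw [← pow_succ]
      congr 1
      omega
    rw [hode']
    rw [← hpow]
    have hkC : (k : ℂ) ≠ 0 := by exact_mod_cast hkne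
    have hcC : (c : ℂ) ≠ 0 := by exact_mod_cast hc
    have hnkC : ((n : ℝ) : ℂ) * ((k : ℝ) : ℂ) = ((m : ℝ) : ℂ) := by exact_mod_cast hnk
    push_cast
    push_cast at hnkC
    field_simp
    linear_combination (2 * (γ u : ℂ) ^ 2 * (c : ℂ) + 2 * (C : ℂ)) * (k : ℂ)
        * ((M (u, q, pu, p) : ℂ)) * ε * G (u, q, pu, p) ^ (2 * n - 1) * G (u, q, pu, p) * hnkC
        + ((γ u : ℂ) ^ 2 * (c : ℂ) + (C : ℂ)) * (1 - (k : ℂ)) * 2 * ((M (u, q, pu, p) : ℂ)) * ε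
          * G (u, q, pu, p) ^ (2 * n - 1) * G (u, q, pu, p) * hnkC
  -- M coordinate derivatives (needed for A)
  have hMfunq : ∀ i, (fun t => M (u, Function.update q i t, pu, p))
      = fun t => k * Real.sqrt (2 * (c * L (u, Function.update q i t, pu, p) + c₀)) :=
    fun i => funext fun t => hM _
  have hMfunp : ∀ i, (fun t => M (u, q, pu, Function.update p i t))
      = fun t => k * Real.sqrt (2 * (c * L (u, q, pu, Function.update p i t) + c₀)) :=
    fun i => funext fun t => hM _
  obtain ⟨dMq, hMqd⟩ : ∃ d : Fin N → ℝ, ∀ i, HasDerivAt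
      (fun t => M (u, Function.update q i t, pu, p)) (d i) (q i) := by
    refine ⟨fun i => deriv (fun t => M (u, Function.update q i t, pu, p)) (q i), fun i => ?_⟩
    apply DifferentiableAt.hasDerivAt
    rw [hMfunq i]
    have hinner : DifferentiableAt ℝ
        (fun t => 2 * (c * L (u, Function.update q i t, pu, p) + c₀)) (q i) :=
      ((((hLqd i).const_mul c).add_const c₀).const_mul 2).differentiableAt
    refine DifferentiableAt.const_mul (hinner.sqrt ?_) k
    simp only [Function.update_eq_self]
    exact ne_of_gt (hLpos (u, q, pu, p))
  obtain ⟨dMp, hMpd⟩ : ∃ d : Fin N → ℝ, ∀ i, HasDerivAt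
      (fun t => M (u, q, pu, Function.update p i t)) (d i) (p i) := by
    refine ⟨fun i => deriv (fun t => M (u, q, pu, Function.update p i t)) (p i), fun i => ?_⟩
    apply DifferentiableAt.hasDerivAt
    rw [hMfunp i]
    have hinner : DifferentiableAt ℝ
        (fun t => 2 * (c * L (u, q, pu, Function.update p i t) + c₀)) (p i) :=
      ((((hLpd i).const_mul c).add_const c₀).const_mul 2).differentiableAt
    refine DifferentiableAt.const_mul (hinner.sqrt ?_) k
    simp only [Function.update_eq_self]
    exact ne_of_gt (hLpos (u, q, pu, p))
  have hrelq : ∀ i, M (u, q, pu, p) * dMq i = k ^ 2 * c * dLq i := by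
    intro i
    have h1 := (hMqd i).fun_pow 2
    simp only [Function.update_eq_self] at h1
    have h2 : HasDerivAt (fun t => M (u, Function.update q i t, pu, p) ^ 2)
        (k ^ 2 * (2 * (c * dLq i))) (q i) := by
      rw [show (fun t => M (u, Function.update q i t, pu, p) ^ 2)
          = fun t => k ^ 2 * (2 * (c * L (u, Function.update q i t, pu, p) + c₀)) from
        funext fun t => hMx2 _]
      exact ((((hLqd i).const_mul c).add_const c₀).const_mul 2).const_mul (k ^ 2)
    have := h1.unique h2
    rw [show (2:ℕ) - 1 = 1 from rfl, pow_one] at this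
    linear_combination (1 / 2 : ℝ) * this
  have hrelp : ∀ i, M (u, q, pu, p) * dMp i = k ^ 2 * c * dLp i := by
    intro i
    have h1 := (hMpd i).fun_pow 2
    simp only [Function.update_eq_self] at h1
    have h2 : HasDerivAt (fun t => M (u, q, pu, Function.update p i t) ^ 2)
        (k ^ 2 * (2 * (c * dLp i))) (p i) := by
      rw [show (fun t => M (u, q, pu, Function.update p i t) ^ 2)
          = fun t => k ^ 2 * (2 * (c * L (u, q, pu, Function.update p i t) + c₀)) from
        funext fun t => hMx2 _]
      exact ((((hLpd i).const_mul c).add_const c₀).const_mul 2).const_mul (k ^ 2)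
    have := h1.unique h2
    rw [show (2:ℕ) - 1 = 1 from rfl, pow_one] at this
    linear_combination (1 / 2 : ℝ) * this
  have hcross : ∀ i, dLp i * dMq i - dLq i * dMp i = 0 := by
    intro i
    have h1 := hrelq i
    have h2 := hrelp i
    have hkc : k ^ 2 * c ≠ 0 := mul_ne_zero (pow_ne_zero 2 hkne) hc
    apply mul_left_cancel₀ hkc
    linear_combination dMp i * h1 - dMq i * h2
  have hγC : HasDerivAt (fun t => ((γ t : ℝ) : ℂ)) ((deriv γ u : ℝ) : ℂ) u := hγd.ofReal_comp
  have hgC : ((γ u : ℝ) : ℂ) ≠ 0 := Complex.ofReal_ne_zero.mpr hg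
  have hs2 : (((Real.sqrt 2 : ℝ)) : ℂ) ^ 2 = 2 := by
    rw [← Complex.ofReal_pow, Real.sq_sqrt (by norm_num : (0:ℝ) ≤ 2)]
    norm_num
  have hsne : (((Real.sqrt 2 : ℝ)) : ℂ) ≠ 0 :=
    Complex.ofReal_ne_zero.mpr (by positivity)
  have hωC : ((ω : ℝ) : ℂ) ≠ 0 := Complex.ofReal_ne_zero.mpr hω
  have hcC : (c : ℂ) ≠ 0 := by exact_mod_cast hc
  have keyA : ∀ w : ℂ, w ^ 2 = -1 → ∀ A : PS N → ℂ,
      (∀ y : PS N, A y = w / ((Real.sqrt 2 : ℝ) : ℂ) * ((y.2.2.1 : ℝ) : ℂ)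
        + ((ω : ℝ) : ℂ) / (((Real.sqrt 2 : ℝ) : ℂ) * ((γ y.1 : ℝ) : ℂ))
        - ((M y : ℝ) : ℂ) / ((Real.sqrt 2 : ℝ) : ℂ) * ((γ y.1 : ℝ) : ℂ)) →
      pbracket H A (u, q, pu, p)
        = (w * ((deriv γ u : ℝ) : ℂ) * (((M (u, q, pu, p) : ℝ) : ℂ)
            + ((ω : ℝ) : ℂ) / ((γ u : ℝ) : ℂ) ^ 2)) * A (u, q, pu, p) := by
    intro w hw A hA'
    have hpduA : pdu A (u, q, pu, p)
        = -(((ω : ℝ) : ℂ) * ((deriv γ u : ℝ) : ℂ))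
              / (((Real.sqrt 2 : ℝ) : ℂ) * ((γ u : ℝ) : ℂ) ^ 2)
          - ((M (u, q, pu, p) : ℝ) : ℂ) / ((Real.sqrt 2 : ℝ) : ℂ) * ((deriv γ u : ℝ) : ℂ) := by
      show deriv (fun t => A (t, q, pu, p)) u = _
      rw [show (fun t => A (t, q, pu, p)) = fun t =>
          w / ((Real.sqrt 2 : ℝ) : ℂ) * ((pu : ℝ) : ℂ)
          + ((ω : ℝ) : ℂ) / (((Real.sqrt 2 : ℝ) : ℂ) * ((γ t : ℝ) : ℂ))
          - ((M (u, q, pu, p) : ℝ) : ℂ) / ((Real.sqrt 2 : ℝ) : ℂ) * ((γ t : ℝ) : ℂ) from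
        funext fun t => by rw [hA' (t, q, pu, p), hMc t pu]]
      have hterm2 : HasDerivAt (fun t => ((ω : ℝ) : ℂ) / (((Real.sqrt 2 : ℝ) : ℂ) * ((γ t : ℝ) : ℂ)))
          ((0 * (((Real.sqrt 2 : ℝ) : ℂ) * ((γ u : ℝ) : ℂ))
            - ((ω : ℝ) : ℂ) * (((Real.sqrt 2 : ℝ) : ℂ) * ((deriv γ u : ℝ) : ℂ)))
              / (((Real.sqrt 2 : ℝ) : ℂ) * ((γ u : ℝ) : ℂ)) ^ 2) u :=
        (hasDerivAt_const u _).div (hγC.const_mul _) (mul_ne_zero hsne hgC)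
      have hterm3 : HasDerivAt
          (fun t => ((M (u, q, pu, p) : ℝ) : ℂ) / ((Real.sqrt 2 : ℝ) : ℂ) * ((γ t : ℝ) : ℂ))
          (((M (u, q, pu, p) : ℝ) : ℂ) / ((Real.sqrt 2 : ℝ) : ℂ) * ((deriv γ u : ℝ) : ℂ)) u :=
        hγC.const_mul _
      have hall := ((hasDerivAt_const u
          (w / ((Real.sqrt 2 : ℝ) : ℂ) * ((pu : ℝ) : ℂ))).fun_add hterm2).fun_sub hterm3
      rw [hall.deriv]
      field_simp
      ring
    have hpdpuA : pdpu A (u, q, pu, p) = w / ((Real.sqrt 2 : ℝ) : ℂ) := by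
      show deriv (fun t => A (u, q, t, p)) pu = _
      rw [show (fun t => A (u, q, t, p)) = fun t =>
          w / ((Real.sqrt 2 : ℝ) : ℂ) * ((t : ℝ) : ℂ)
          + ((ω : ℝ) : ℂ) / (((Real.sqrt 2 : ℝ) : ℂ) * ((γ u : ℝ) : ℂ))
          - ((M (u, q, pu, p) : ℝ) : ℂ) / ((Real.sqrt 2 : ℝ) : ℂ) * ((γ u : ℝ) : ℂ) from
        funext fun t => by rw [hA' (u, q, t, p), hMc u t]]
      have hid : HasDerivAt (fun t : ℝ => ((t : ℝ) : ℂ)) 1 pu := (hasDerivAt_id pu).ofReal_comp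
      have hall := (((hid.const_mul (w / ((Real.sqrt 2 : ℝ) : ℂ))).add_const
          (((ω : ℝ) : ℂ) / (((Real.sqrt 2 : ℝ) : ℂ) * ((γ u : ℝ) : ℂ)))).sub_const
          (((M (u, q, pu, p) : ℝ) : ℂ) / ((Real.sqrt 2 : ℝ) : ℂ) * ((γ u : ℝ) : ℂ)))
      rw [hall.deriv]
      ring
    have hpdqA : ∀ i, pdq i A (u, q, pu, p)
        = -(((dMq i : ℝ) : ℂ) / ((Real.sqrt 2 : ℝ) : ℂ) * ((γ u : ℝ) : ℂ)) := by
      intro i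
      show deriv (fun t => A (u, Function.update q i t, pu, p)) (q i) = _
      rw [show (fun t => A (u, Function.update q i t, pu, p)) = fun t =>
          w / ((Real.sqrt 2 : ℝ) : ℂ) * ((pu : ℝ) : ℂ)
          + ((ω : ℝ) : ℂ) / (((Real.sqrt 2 : ℝ) : ℂ) * ((γ u : ℝ) : ℂ))
          - ((M (u, Function.update q i t, pu, p) : ℝ) : ℂ) / ((Real.sqrt 2 : ℝ) : ℂ)
              * ((γ u : ℝ) : ℂ) from
        funext fun t => by rw [hA' (u, Function.update q i t, pu, p)]]
      have h3 : HasDerivAt (fun t =>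
          ((M (u, Function.update q i t, pu, p) : ℝ) : ℂ) / ((Real.sqrt 2 : ℝ) : ℂ)
            * ((γ u : ℝ) : ℂ))
          (((dMq i : ℝ) : ℂ) / ((Real.sqrt 2 : ℝ) : ℂ) * ((γ u : ℝ) : ℂ)) (q i) :=
        (((hMqd i).ofReal_comp).div_const _).mul_const _
      have hall := (hasDerivAt_const (q i)
          (w / ((Real.sqrt 2 : ℝ) : ℂ) * ((pu : ℝ) : ℂ)
            + ((ω : ℝ) : ℂ) / (((Real.sqrt 2 : ℝ) : ℂ) * ((γ u : ℝ) : ℂ)))).fun_sub h3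
      rw [hall.deriv]
      ring
    have hpdpA : ∀ i, pdp i A (u, q, pu, p)
        = -(((dMp i : ℝ) : ℂ) / ((Real.sqrt 2 : ℝ) : ℂ) * ((γ u : ℝ) : ℂ)) := by
      intro i
      show deriv (fun t => A (u, q, pu, Function.update p i t)) (p i) = _
      rw [show (fun t => A (u, q, pu, Function.update p i t)) = fun t =>
          w / ((Real.sqrt 2 : ℝ) : ℂ) * ((pu : ℝ) : ℂ)
          + ((ω : ℝ) : ℂ) / (((Real.sqrt 2 : ℝ) : ℂ) * ((γ u : ℝ) : ℂ))
          - ((M (u, q, pu, Function.update p i t) : ℝ) : ℂ) / ((Real.sqrt 2 : ℝ) : ℂ)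
              * ((γ u : ℝ) : ℂ) from
        funext fun t => by rw [hA' (u, q, pu, Function.update p i t)]]
      have h3 : HasDerivAt (fun t =>
          ((M (u, q, pu, Function.update p i t) : ℝ) : ℂ) / ((Real.sqrt 2 : ℝ) : ℂ)
            * ((γ u : ℝ) : ℂ))
          (((dMp i : ℝ) : ℂ) / ((Real.sqrt 2 : ℝ) : ℂ) * ((γ u : ℝ) : ℂ)) (p i) :=
        (((hMpd i).ofReal_comp).div_const _).mul_const _
      have hall := (hasDerivAt_const (p i)
          (w / ((Real.sqrt 2 : ℝ) : ℂ) * ((pu : ℝ) : ℂ)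
            + ((ω : ℝ) : ℂ) / (((Real.sqrt 2 : ℝ) : ℂ) * ((γ u : ℝ) : ℂ)))).fun_sub h3
      rw [hall.deriv]
      ring
    have hsumA : ∑ i : Fin N, (pdp i H (u, q, pu, p) * pdq i A (u, q, pu, p)
        - pdq i H (u, q, pu, p) * pdp i A (u, q, pu, p)) = 0 := by
      apply Finset.sum_eq_zero
      intro i _
      rw [hpdqH i, hpdpH i, hpdqA i, hpdpA i]
      have hcrC : ((dLp i : ℝ) : ℂ) * ((dMq i : ℝ) : ℂ)
          - ((dLq i : ℝ) : ℂ) * ((dMp i : ℝ) : ℂ) = 0 := by exact_mod_cast hcross i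
      push_cast
      linear_combination (-((γ u : ℂ) ^ 2 + (C : ℂ) / (c : ℂ)) * (k : ℂ) ^ 2 * (c : ℂ)
        * ((γ u : ℂ)) / ((Real.sqrt 2 : ℝ) : ℂ)) * hcrC
    show (pdpu H (u, q, pu, p) * pdu A (u, q, pu, p)
        - pdu H (u, q, pu, p) * pdpu A (u, q, pu, p))
      + ∑ i : Fin N, (pdp i H (u, q, pu, p) * pdq i A (u, q, pu, p)
        - pdq i H (u, q, pu, p) * pdp i A (u, q, pu, p)) = _
    rw [hsumA, hpduA, hpdpuA, hpduH, hpdpuH, hA' (u, q, pu, p)]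
    have hgg : ((γ u : ℝ) : ℂ) * ((γ u : ℝ) : ℂ)⁻¹ = 1 := mul_inv_cancel₀ hgC
    push_cast
    linear_combination (-(((deriv γ u : ℝ) : ℂ) * ((pu : ℝ) : ℂ)
        * (((ω : ℝ) : ℂ) / ((γ u : ℝ) : ℂ) ^ 2 + ((M (u, q, pu, p) : ℝ) : ℂ))
        / ((Real.sqrt 2 : ℝ) : ℂ))) * hw
      + (((ω : ℝ) : ℂ) * ((deriv γ u : ℝ) : ℂ) * ((M (u, q, pu, p) : ℝ) : ℂ) * w
        / (((Real.sqrt 2 : ℝ) : ℂ) * ((γ u : ℝ) : ℂ))) * hgg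
  have hgpow : HasDerivAt (fun t => ((γ t : ℝ) : ℂ) ^ 2)
      (2 * ((γ u : ℝ) : ℂ) * ((deriv γ u : ℝ) : ℂ)) u := by
    have h := hasDerivAt_pow_succ hγC 1
    norm_num at h
    convert h using 1
  have keyD : ∀ w : ℂ, w ^ 2 = -1 → ∀ D : PS N → ℂ,
      (∀ y : PS N, D y = w * ((y.2.2.1 : ℝ) : ℂ) / ((γ y.1 : ℝ) : ℂ)
          + ((ω : ℝ) : ℂ) / ((γ y.1 : ℝ) : ℂ) ^ 2 - H y / ((ω : ℝ) : ℂ)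
          - ((C : ℝ) : ℂ) / (((c : ℝ) : ℂ) * ((ω : ℝ) : ℂ))
            * (((c₀ : ℝ) : ℂ) * ((k : ℝ) : ℂ) ^ 2 - ((M y : ℝ) : ℂ) ^ 2 / 2)) →
      pbracket H D (u, q, pu, p)
        = (2 * w * ((deriv γ u : ℝ) : ℂ)
            * (((ω : ℝ) : ℂ) / ((γ u : ℝ) : ℂ) ^ 2)) * D (u, q, pu, p) := by
    intro w hw D hD'
    have hpduD : pdu D (u, q, pu, p)
        = -(w * ((pu : ℝ) : ℂ) * ((deriv γ u : ℝ) : ℂ)) / ((γ u : ℝ) : ℂ) ^ 2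
          - 2 * ((ω : ℝ) : ℂ) * ((deriv γ u : ℝ) : ℂ) / ((γ u : ℝ) : ℂ) ^ 3
          - ((γ u * deriv γ u * M (u, q, pu, p) ^ 2
              - ω ^ 2 * deriv γ u / γ u ^ 3 : ℝ) : ℂ) / ((ω : ℝ) : ℂ) := by
      show deriv (fun t => D (t, q, pu, p)) u = _
      rw [show (fun t => D (t, q, pu, p)) = fun t =>
          w * ((pu : ℝ) : ℂ) / ((γ t : ℝ) : ℂ) + ((ω : ℝ) : ℂ) / ((γ t : ℝ) : ℂ) ^ 2
          - ((1 / 2 * pu ^ 2 + 1 / 2 * (γ t ^ 2 + C / c) * M (u, q, pu, p) ^ 2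
              + ω ^ 2 / (2 * γ t ^ 2) - C / c * k ^ 2 * c₀ : ℝ) : ℂ) / ((ω : ℝ) : ℂ)
          - ((C : ℝ) : ℂ) / (((c : ℝ) : ℂ) * ((ω : ℝ) : ℂ))
            * (((c₀ : ℝ) : ℂ) * ((k : ℝ) : ℂ) ^ 2 - ((M (u, q, pu, p) : ℝ) : ℂ) ^ 2 / 2) from
        funext fun t => by rw [hD' (t, q, pu, p), hMc t pu, congrFun hHufun t]]
      have h1 : HasDerivAt (fun t => w * ((pu : ℝ) : ℂ) / ((γ t : ℝ) : ℂ))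
          ((0 * ((γ u : ℝ) : ℂ) - w * ((pu : ℝ) : ℂ) * ((deriv γ u : ℝ) : ℂ))
            / ((γ u : ℝ) : ℂ) ^ 2) u :=
        (hasDerivAt_const u _).div hγC hgC
      have h2 : HasDerivAt (fun t => ((ω : ℝ) : ℂ) / ((γ t : ℝ) : ℂ) ^ 2)
          ((0 * ((γ u : ℝ) : ℂ) ^ 2
            - ((ω : ℝ) : ℂ) * (2 * ((γ u : ℝ) : ℂ) * ((deriv γ u : ℝ) : ℂ)))
            / (((γ u : ℝ) : ℂ) ^ 2) ^ 2) u :=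
        (hasDerivAt_const u _).div hgpow (pow_ne_zero 2 hgC)
      have h3 := (hHuderiv.ofReal_comp).div_const ((ω : ℝ) : ℂ)
      have hall := (((h1.fun_add h2).fun_sub h3).sub_const
        (((C : ℝ) : ℂ) / (((c : ℝ) : ℂ) * ((ω : ℝ) : ℂ))
          * (((c₀ : ℝ) : ℂ) * ((k : ℝ) : ℂ) ^ 2 - ((M (u, q, pu, p) : ℝ) : ℂ) ^ 2 / 2)))
      rw [hall.deriv]
      field_simp
      ring
    have hpdpuD : pdpu D (u, q, pu, p)
        = w / ((γ u : ℝ) : ℂ) - ((pu : ℝ) : ℂ) / ((ω : ℝ) : ℂ) := by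
      show deriv (fun t => D (u, q, t, p)) pu = _
      rw [show (fun t => D (u, q, t, p)) = fun t =>
          w * ((t : ℝ) : ℂ) / ((γ u : ℝ) : ℂ) + ((ω : ℝ) : ℂ) / ((γ u : ℝ) : ℂ) ^ 2
          - ((1 / 2 * t ^ 2 + 1 / 2 * (γ u ^ 2 + C / c) * M (u, q, pu, p) ^ 2
              + ω ^ 2 / (2 * γ u ^ 2) - C / c * k ^ 2 * c₀ : ℝ) : ℂ) / ((ω : ℝ) : ℂ)
          - ((C : ℝ) : ℂ) / (((c : ℝ) : ℂ) * ((ω : ℝ) : ℂ))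
            * (((c₀ : ℝ) : ℂ) * ((k : ℝ) : ℂ) ^ 2 - ((M (u, q, pu, p) : ℝ) : ℂ) ^ 2 / 2) from
        funext fun t => by rw [hD' (u, q, t, p), hMc u t, congrFun hHpufun t]]
      have hid : HasDerivAt (fun t : ℝ => ((t : ℝ) : ℂ)) 1 pu := (hasDerivAt_id pu).ofReal_comp
      have h1 : HasDerivAt (fun t : ℝ => w * ((t : ℝ) : ℂ) / ((γ u : ℝ) : ℂ))
          (w * 1 / ((γ u : ℝ) : ℂ)) pu := (hid.const_mul w).div_const _
      have hreal : HasDerivAt (fun t : ℝ => 1 / 2 * t ^ 2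
          + 1 / 2 * (γ u ^ 2 + C / c) * M (u, q, pu, p) ^ 2
          + ω ^ 2 / (2 * γ u ^ 2) - C / c * k ^ 2 * c₀) (1 / 2 * (2 * pu ^ 1)) pu :=
        ((((hasDerivAt_pow 2 pu).const_mul (1 / 2)).add_const _).add_const _).sub_const _
      have h3 := (hreal.ofReal_comp).div_const ((ω : ℝ) : ℂ)
      have hall := (((h1.add_const (((ω : ℝ) : ℂ) / ((γ u : ℝ) : ℂ) ^ 2)).fun_sub h3).sub_const
        (((C : ℝ) : ℂ) / (((c : ℝ) : ℂ) * ((ω : ℝ) : ℂ))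
          * (((c₀ : ℝ) : ℂ) * ((k : ℝ) : ℂ) ^ 2 - ((M (u, q, pu, p) : ℝ) : ℂ) ^ 2 / 2)))
      rw [hall.deriv]
      push_cast
      ring
    have hpdqD : ∀ i, pdq i D (u, q, pu, p)
        = -(((γ u : ℝ) : ℂ) ^ 2 * ((k : ℝ) : ℂ) ^ 2 * ((c : ℝ) : ℂ) / ((ω : ℝ) : ℂ))
            * ((dLq i : ℝ) : ℂ) := by
      intro i
      show deriv (fun t => D (u, Function.update q i t, pu, p)) (q i) = _
      rw [show (fun t => D (u, Function.update q i t, pu, p)) = fun t =>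
          w * ((pu : ℝ) : ℂ) / ((γ u : ℝ) : ℂ) + ((ω : ℝ) : ℂ) / ((γ u : ℝ) : ℂ) ^ 2
          - ((1 / 2 * pu ^ 2 + 1 / 2 * (γ u ^ 2 + C / c)
                * (k ^ 2 * (2 * (c * L (u, Function.update q i t, pu, p) + c₀)))
              + ω ^ 2 / (2 * γ u ^ 2) - C / c * k ^ 2 * c₀ : ℝ) : ℂ) / ((ω : ℝ) : ℂ)
          - ((C : ℝ) : ℂ) / (((c : ℝ) : ℂ) * ((ω : ℝ) : ℂ))
            * (((c₀ : ℝ) : ℂ) * ((k : ℝ) : ℂ) ^ 2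
              - ((k ^ 2 * (2 * (c * L (u, Function.update q i t, pu, p) + c₀)) : ℝ) : ℂ) / 2) from
        funext fun t => by
          rw [hD' (u, Function.update q i t, pu, p), congrFun (hHqfun i) t,
            show ((M (u, Function.update q i t, pu, p) : ℝ) : ℂ) ^ 2
              = ((k ^ 2 * (2 * (c * L (u, Function.update q i t, pu, p) + c₀)) : ℝ) : ℂ) from by
              rw [← Complex.ofReal_pow, hMx2]]]
      have hq1 : HasDerivAt (fun t => (1 / 2 * pu ^ 2 + 1 / 2 * (γ u ^ 2 + C / c)
            * (k ^ 2 * (2 * (c * L (u, Function.update q i t, pu, p) + c₀)))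
            + ω ^ 2 / (2 * γ u ^ 2) - C / c * k ^ 2 * c₀ : ℝ))
          (0 + 1 / 2 * (γ u ^ 2 + C / c) * (k ^ 2 * (2 * (c * dLq i)))) (q i) :=
        (((hasDerivAt_const (q i) (1 / 2 * pu ^ 2)).fun_add
          ((((((hLqd i).const_mul c).add_const c₀).const_mul 2).const_mul (k ^ 2)).const_mul
            (1 / 2 * (γ u ^ 2 + C / c)))).add_const (ω ^ 2 / (2 * γ u ^ 2))).sub_const
          (C / c * k ^ 2 * c₀)
      have hq2 : HasDerivAt (fun t =>
          ((k ^ 2 * (2 * (c * L (u, Function.update q i t, pu, p) + c₀)) : ℝ) : ℂ))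
          ((k ^ 2 * (2 * (c * dLq i)) : ℝ) : ℂ) (q i) :=
        (((((hLqd i).const_mul c).add_const c₀).const_mul 2).const_mul (k ^ 2)).ofReal_comp
      have h3 := (hq1.ofReal_comp).div_const ((ω : ℝ) : ℂ)
      have h4 := ((hq2.div_const 2).const_sub
          (((c₀ : ℝ) : ℂ) * ((k : ℝ) : ℂ) ^ 2)).const_mul
          (((C : ℝ) : ℂ) / (((c : ℝ) : ℂ) * ((ω : ℝ) : ℂ)))
      have hall := (((hasDerivAt_const (q i)
        (w * ((pu : ℝ) : ℂ) / ((γ u : ℝ) : ℂ)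
          + ((ω : ℝ) : ℂ) / ((γ u : ℝ) : ℂ) ^ 2)).fun_sub h3).fun_sub h4)
      rw [hall.deriv]
      have hcC2 : ((c : ℝ) : ℂ) ≠ 0 := hcC
      push_cast
      field_simp
      ring
    have hpdpD : ∀ i, pdp i D (u, q, pu, p)
        = -(((γ u : ℝ) : ℂ) ^ 2 * ((k : ℝ) : ℂ) ^ 2 * ((c : ℝ) : ℂ) / ((ω : ℝ) : ℂ))
            * ((dLp i : ℝ) : ℂ) := by
      intro i
      show deriv (fun t => D (u, q, pu, Function.update p i t)) (p i) = _
      rw [show (fun t => D (u, q, pu, Function.update p i t)) = fun t =>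
          w * ((pu : ℝ) : ℂ) / ((γ u : ℝ) : ℂ) + ((ω : ℝ) : ℂ) / ((γ u : ℝ) : ℂ) ^ 2
          - ((1 / 2 * pu ^ 2 + 1 / 2 * (γ u ^ 2 + C / c)
                * (k ^ 2 * (2 * (c * L (u, q, pu, Function.update p i t) + c₀)))
              + ω ^ 2 / (2 * γ u ^ 2) - C / c * k ^ 2 * c₀ : ℝ) : ℂ) / ((ω : ℝ) : ℂ)
          - ((C : ℝ) : ℂ) / (((c : ℝ) : ℂ) * ((ω : ℝ) : ℂ))
            * (((c₀ : ℝ) : ℂ) * ((k : ℝ) : ℂ) ^ 2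
              - ((k ^ 2 * (2 * (c * L (u, q, pu, Function.update p i t) + c₀)) : ℝ) : ℂ) / 2) from
        funext fun t => by
          rw [hD' (u, q, pu, Function.update p i t), congrFun (hHpfun i) t,
            show ((M (u, q, pu, Function.update p i t) : ℝ) : ℂ) ^ 2
              = ((k ^ 2 * (2 * (c * L (u, q, pu, Function.update p i t) + c₀)) : ℝ) : ℂ) from by
              rw [← Complex.ofReal_pow, hMx2]]]
      have hq1 : HasDerivAt (fun t => (1 / 2 * pu ^ 2 + 1 / 2 * (γ u ^ 2 + C / c)
            * (k ^ 2 * (2 * (c * L (u, q, pu, Function.update p i t) + c₀)))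
            + ω ^ 2 / (2 * γ u ^ 2) - C / c * k ^ 2 * c₀ : ℝ))
          (0 + 1 / 2 * (γ u ^ 2 + C / c) * (k ^ 2 * (2 * (c * dLp i)))) (p i) :=
        (((hasDerivAt_const (p i) (1 / 2 * pu ^ 2)).fun_add
          ((((((hLpd i).const_mul c).add_const c₀).const_mul 2).const_mul (k ^ 2)).const_mul
            (1 / 2 * (γ u ^ 2 + C / c)))).add_const (ω ^ 2 / (2 * γ u ^ 2))).sub_const
          (C / c * k ^ 2 * c₀)
      have hq2 : HasDerivAt (fun t =>
          ((k ^ 2 * (2 * (c * L (u, q, pu, Function.update p i t) + c₀)) : ℝ) : ℂ))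
          ((k ^ 2 * (2 * (c * dLp i)) : ℝ) : ℂ) (p i) :=
        (((((hLpd i).const_mul c).add_const c₀).const_mul 2).const_mul (k ^ 2)).ofReal_comp
      have h3 := (hq1.ofReal_comp).div_const ((ω : ℝ) : ℂ)
      have h4 := ((hq2.div_const 2).const_sub
          (((c₀ : ℝ) : ℂ) * ((k : ℝ) : ℂ) ^ 2)).const_mul
          (((C : ℝ) : ℂ) / (((c : ℝ) : ℂ) * ((ω : ℝ) : ℂ)))
      have hall := (((hasDerivAt_const (p i)
        (w * ((pu : ℝ) : ℂ) / ((γ u : ℝ) : ℂ)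
          + ((ω : ℝ) : ℂ) / ((γ u : ℝ) : ℂ) ^ 2)).fun_sub h3).fun_sub h4)
      rw [hall.deriv]
      push_cast
      field_simp
      ring
    have hsumD : ∑ i : Fin N, (pdp i H (u, q, pu, p) * pdq i D (u, q, pu, p)
        - pdq i H (u, q, pu, p) * pdp i D (u, q, pu, p)) = 0 := by
      apply Finset.sum_eq_zero
      intro i _
      rw [hpdqH i, hpdpH i, hpdqD i, hpdpD i]
      push_cast
      ring
    show (pdpu H (u, q, pu, p) * pdu D (u, q, pu, p)
        - pdu H (u, q, pu, p) * pdpu D (u, q, pu, p))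
      + ∑ i : Fin N, (pdp i H (u, q, pu, p) * pdq i D (u, q, pu, p)
        - pdq i H (u, q, pu, p) * pdp i D (u, q, pu, p)) = _
    rw [hsumD, hpduD, hpdpuD, hpduH, hpdpuH, hD' (u, q, pu, p), hH (u, q, pu, p)]
    have homm : ((ω : ℝ) : ℂ) * ((ω : ℝ) : ℂ)⁻¹ = 1 := mul_inv_cancel₀ hωC
    have hgg : ((γ u : ℝ) : ℂ) * ((γ u : ℝ) : ℂ)⁻¹ = 1 := mul_inv_cancel₀ hgC
    push_cast
    linear_combination (-(2 * ((deriv γ u : ℝ) : ℂ) * ((ω : ℝ) : ℂ) * ((pu : ℝ) : ℂ)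
        / ((γ u : ℝ) : ℂ) ^ 3)) * hw
      + (((pu : ℝ) : ℂ) ^ 2 * w * ((deriv γ u : ℝ) : ℂ) / ((γ u : ℝ) : ℂ) ^ 2
        + w * ((deriv γ u : ℝ) : ℂ) * ((M (u, q, pu, p) : ℝ) : ℂ) ^ 2
            * ((γ u : ℝ) : ℂ) ^ 2 * ((γ u : ℝ) : ℂ)⁻¹ ^ 2
        + w * ((deriv γ u : ℝ) : ℂ) * ((ω : ℝ) : ℂ) ^ 2 * ((γ u : ℝ) : ℂ)⁻¹ ^ 4) * homm
      + (w * ((deriv γ u : ℝ) : ℂ) * ((M (u, q, pu, p) : ℝ) : ℂ) ^ 2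
          * ((γ u : ℝ) : ℂ) * ((γ u : ℝ) : ℂ)⁻¹) * hgg
  refine ⟨?_, ?_, ?_, ?_, ?_, ?_⟩
  · exact keyG Gp Complex.I hGpsmooth hGpqp hGpladder
  · rw [keyG Gm (-Complex.I) hGmsmooth hGmqp (fun y => by rw [hGmladder y]; try ring)]
    try ring
  · rw [keyA (-Complex.I) (by rw [neg_sq, Complex.I_sq]) Ap (fun y => by rw [hAp y]; try ring)]
    try ring
  · rw [keyA Complex.I Complex.I_sq Am (fun y => by rw [hAm y]; try ring)]
    try ring
  · rw [keyD (-Complex.I) (by rw [neg_sq, Complex.I_sq]) Dp (fun y => by rw [hDp y]; try ring)]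
    try ring
  · rw [keyD Complex.I Complex.I_sq Dm (fun y => by rw [hDm y]; try ring)]
    try ring
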